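/- arXiv:2308.03528 — 2 statements merged into one kernel-verified Lean document; each statement's English description precedes it below -/
import Mathlib

section
/- If Maker has a winning strategy in the Maker-Breaker game of arboricity on a finite graph G with k colours, then Maker also has a winning strategy on G with k+1 colours. -/
/-- The spanning subgraph of `G` consisting of those edges given colour `c`
by the partial edge-colouring `f`. -/
def colourSub {V : Type} (G : SimpleGraph V) {k : ℕ} (f : Sym2 V → Option (Fin k))
    (c : Fin k) : SimpleGraph V where
  Adj u v := G.Adj u v ∧ f s(u, v) = some c
  symm := ⟨fun u v h => ⟨h.1.symm, by rw [Sym2.eq_swap]; exact h.2⟩⟩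
  loopless := ⟨fun u h => G.loopless.irrefl u h.1⟩

/-- Assigning colour `c` to the uncoloured edge `xy` is a legal move in the game of
arboricity: it creates no monochromatic cycle. -/
def ArbLegal {V : Type} (G : SimpleGraph V) {k : ℕ} (f : Sym2 V → Option (Fin k))
    (x y : V) (c : Fin k) : Prop :=
  G.Adj x y ∧ f s(x, y) = none ∧ ¬ (colourSub G f c).Reachable x y

/-- Some uncoloured edge cannot be given any colour: Breaker's winning condition. -/
def ArbStuck {V : Type} (G : SimpleGraph V) {k : ℕ} (f : Sym2 V → Option (Fin k)) : Prop :=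
  ∃ x y, G.Adj x y ∧ f s(x, y) = none ∧ ∀ c, (colourSub G f c).Reachable x y

/-- `ArbMakerWins G k f t` : Maker has a winning strategy in the game of arboricity with
`k` colours from the position with partial colouring `f`, where `t = true` means it is
Maker's turn, `t = false` Breaker's turn.  Maker wins when every edge is coloured,
having avoided any uncoloured edge ever becoming unplayable. -/
inductive ArbMakerWins {V : Type} [DecidableEq V] (G : SimpleGraph V) (k : ℕ) :
    (Sym2 V → Option (Fin k)) → Bool → Prop
  | done (f : Sym2 V → Option (Fin k)) (t : Bool) (h : ∀ e ∈ G.edgeSet, f e ≠ none) :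
      ArbMakerWins G k f t
  | maker (f : Sym2 V → Option (Fin k)) (hns : ¬ ArbStuck G f) (x y : V) (c : Fin k)
      (hc : ArbLegal G f x y c)
      (h : ArbMakerWins G k (Function.update f s(x, y) (some c)) false) :
      ArbMakerWins G k f true
  | breaker (f : Sym2 V → Option (Fin k)) (hns : ¬ ArbStuck G f)
      (hne : ∃ e ∈ G.edgeSet, f e = none)
      (h : ∀ x y c, ArbLegal G f x y c →
        ArbMakerWins G k (Function.update f s(x, y) (some c)) true) :
      ArbMakerWins G k f false

/-! Maker with `k + 1` colours imitates a winning `k`-colour strategy in an imagined `k`-colour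
game, playing its colour `c` as `c.castSucc`. A Breaker move of colour `c.castSucc` that is legal in
the imagined game is mirrored there; any other Breaker move (the new colour `Fin.last k`, or a colour
`c.castSucc` whose imagined class already joins the endpoints) is recorded in the imagined game with
some legal colour, which exists since the imagined game is never stuck. Throughout, each real class
`c.castSucc` connects no more pairs than the imagined class `c`, so imagined moves stay legal and the
real game never gets stuck. -/

theorem SimpleGraph.reachable_le_of_adj_le_reachable {V : Type*} {H K : SimpleGraph V}
    (h : H.Adj ≤ K.Reachable) : H.Reachable ≤ K.Reachable := by
  intro a b hab
  rw [SimpleGraph.reachable_eq_reflTransGen] at hab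
  induction hab with
  | refl => rfl
  | tail _ hbc ih => exact ih.trans (h _ _ hbc)

section Arboricity

variable {V : Type} (G : SimpleGraph V) {k : ℕ}

lemma colourSub_const_none (c : Fin k) : colourSub G (fun _ => none) c = ⊥ := by
  ext u w
  simp [colourSub]

lemma arbLegal_iff_not_reachable {f : Sym2 V → Option (Fin k)} {x y : V} (c : Fin k)
    (hadj : G.Adj x y) (hnone : f s(x, y) = none) :
    ArbLegal G f x y c ↔ ¬ (colourSub G f c).Reachable x y := by
  simp [ArbLegal, hadj, hnone]

lemma exists_arbLegal_of_not_arbStuck {f : Sym2 V → Option (Fin k)} (hns : ¬ ArbStuck G f)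
    {x y : V} (hadj : G.Adj x y) (hnone : f s(x, y) = none) : ∃ c, ArbLegal G f x y c := by
  by_contra! hc
  exact hns ⟨x, y, hadj, hnone, fun c => by
    simpa [arbLegal_iff_not_reachable G c hadj hnone] using hc c⟩

/-- `f'` is the imagined `k`-colour position behind the real `(k + 1)`-colour position `f`. The
last colour `Fin.last k` of `f` is unconstrained. -/
structure ArbSim (f' : Sym2 V → Option (Fin k)) (f : Sym2 V → Option (Fin (k + 1))) : Prop where
  eq_none_iff : ∀ e, f e = none ↔ f' e = none
  reachable : ∀ (c : Fin k) (a b : V), (colourSub G f c.castSucc).Reachable a b →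
    (colourSub G f' c).Reachable a b

lemma arbSim_const_none : ArbSim G (k := k) (fun _ => none) (fun _ => none) where
  eq_none_iff _ := by simp
  reachable c a b hab := by
    rw [colourSub_const_none, SimpleGraph.reachable_bot] at hab
    exact hab ▸ SimpleGraph.Reachable.refl a

namespace ArbSim

variable {G} {f' : Sym2 V → Option (Fin k)} {f : Sym2 V → Option (Fin (k + 1))}

lemma not_arbStuck (hsim : ArbSim G f' f) (hns : ¬ ArbStuck G f') : ¬ ArbStuck G f := by
  rintro ⟨x, y, hadj, hnone, hall⟩
  exact hns ⟨x, y, hadj, (hsim.eq_none_iff _).mp hnone,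
    fun c => hsim.reachable c x y (hall c.castSucc)⟩

lemma arbLegal (hsim : ArbSim G f' f) {x y : V} {c : Fin k} (h : ArbLegal G f' x y c) :
    ArbLegal G f x y c.castSucc :=
  ⟨h.1, (hsim.eq_none_iff _).mpr h.2.1, fun hr => h.2.2 (hsim.reachable c x y hr)⟩

end ArbSim

variable [DecidableEq V]

lemma colourSub_le_update {f : Sym2 V → Option (Fin k)} {e : Sym2 V} (he : f e = none)
    (v : Option (Fin k)) (c : Fin k) : colourSub G f c ≤ colourSub G (Function.update f e v) c := by
  rintro u w ⟨hadj, hc⟩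
  refine ⟨hadj, ?_⟩
  rwa [Function.update_of_ne]
  rintro rfl
  simp [he] at hc

lemma colourSub_update_adj_of_ne {f : Sym2 V → Option (Fin k)} {e : Sym2 V}
    {v : Option (Fin k)} {c : Fin k} {u w : V} (hne : s(u, w) ≠ e) :
    (colourSub G (Function.update f e v) c).Adj u w ↔ (colourSub G f c).Adj u w := by
  simp [colourSub, Function.update_of_ne hne]

lemma colourSub_update_adj_self (f : Sym2 V → Option (Fin k)) {x y : V} (hadj : G.Adj x y)
    (c : Fin k) : (colourSub G (Function.update f s(x, y) (some c)) c).Adj x y :=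
  ⟨hadj, by simp⟩

namespace ArbSim

variable {G} {f' : Sym2 V → Option (Fin k)} {f : Sym2 V → Option (Fin (k + 1))}

lemma update (hsim : ArbSim G f' f) {x y : V} (hnone : f' s(x, y) = none)
    (c : Fin k) (d : Fin (k + 1))
    (hd : ∀ c' : Fin k, d = c'.castSucc →
      (colourSub G (Function.update f' s(x, y) (some c)) c').Reachable x y) :
    ArbSim G (Function.update f' s(x, y) (some c)) (Function.update f s(x, y) (some d)) where
  eq_none_iff e := by
    rcases eq_or_ne e s(x, y) with rfl | he
    · simp
    · simpa only [Function.update_of_ne he] using hsim.eq_none_iff e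
  reachable c' := by
    refine SimpleGraph.reachable_le_of_adj_le_reachable fun u w huw => ?_
    rcases eq_or_ne s(u, w) s(x, y) with hxy | hxy
    · have hdc : d = c'.castSucc := by
        simpa [colourSub, hxy] using huw.2
      rcases Sym2.eq_iff.mp hxy with ⟨rfl, rfl⟩ | ⟨rfl, rfl⟩
      · exact hd c' hdc
      · exact (hd c' hdc).symm
    · rw [colourSub_update_adj_of_ne G hxy] at huw
      exact (hsim.reachable c' u w huw.reachable).mono (colourSub_le_update G hnone _ c')

lemma update_castSucc (hsim : ArbSim G f' f) {x y : V} (hadj : G.Adj x y)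
    (hnone : f' s(x, y) = none) (c : Fin k) :
    ArbSim G (Function.update f' s(x, y) (some c)) (Function.update f s(x, y) (some c.castSucc)) :=
  hsim.update hnone c _ fun c' hc' => by
    obtain rfl := Fin.castSucc_injective _ hc'
    exact (colourSub_update_adj_self G f' hadj c).reachable

lemma exists_reply (hsim : ArbSim G f' f) (hns : ¬ ArbStuck G f') {x y : V} (hadj : G.Adj x y)
    (hnone : f s(x, y) = none) (d : Fin (k + 1)) :
    ∃ c, ArbLegal G f' x y c ∧
      ArbSim G (Function.update f' s(x, y) (some c)) (Function.update f s(x, y) (some d)) := by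
  have hnone' : f' s(x, y) = none := (hsim.eq_none_iff _).mp hnone
  by_cases hmirror : ∃ c, d = c.castSucc ∧ ArbLegal G f' x y c
  · obtain ⟨c, rfl, hc⟩ := hmirror
    exact ⟨c, hc, hsim.update_castSucc hadj hnone' c⟩
  · obtain ⟨c, hc⟩ := exists_arbLegal_of_not_arbStuck G hns hadj hnone'
    refine ⟨c, hc, hsim.update hnone' c d fun c' hc' => ?_⟩
    have hr : (colourSub G f' c').Reachable x y := not_not.mp fun hr =>
      hmirror ⟨c', hc', (arbLegal_iff_not_reachable G c' hadj hnone').mpr hr⟩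
    exact hr.mono (colourSub_le_update G hnone' _ c')

end ArbSim

theorem ArbMakerWins.of_arbSim {f' : Sym2 V → Option (Fin k)} {t : Bool}
    (h : ArbMakerWins G k f' t) {f : Sym2 V → Option (Fin (k + 1))} (hsim : ArbSim G f' f) :
    ArbMakerWins G (k + 1) f t := by
  induction h generalizing f with
  | done f' t hall =>
    exact .done f t fun e he hn => hall e he ((hsim.eq_none_iff e).mp hn)
  | maker f' hns x y c hc _ ih =>
    exact .maker f (hsim.not_arbStuck hns) x y c.castSucc (hsim.arbLegal hc)
      (ih (hsim.update_castSucc hc.1 hc.2.1 c))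
  | breaker f' hns hne _ ih =>
    refine .breaker f (hsim.not_arbStuck hns) ?_ fun x y d hd => ?_
    · obtain ⟨e, he, hnone⟩ := hne
      exact ⟨e, he, (hsim.eq_none_iff e).mpr hnone⟩
    · obtain ⟨c, hc, hsim'⟩ := hsim.exists_reply hns hd.1 hd.2.1 d
      exact ih x y c hc hsim'

end Arboricity

theorem arboricity_maker_monotone_general {V : Type} [DecidableEq V]
    (G : SimpleGraph V) (k : ℕ)
    (h : ArbMakerWins G k (fun _ => none) true) :
    ArbMakerWins G (k + 1) (fun _ => none) true :=
  h.of_arbSim G (arbSim_const_none G)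

/-- If Maker has a winning strategy in the game of arboricity on a
finite graph `G` with `k` colours, then Maker also has a winning strategy on `G` with
`k + 1` colours. -/
theorem arboricity_maker_monotone {V : Type} [Fintype V] [DecidableEq V]
    (G : SimpleGraph V) (k : ℕ)
    (h : ArbMakerWins G k (fun _ => none) true) :
    ArbMakerWins G (k + 1) (fun _ => none) true :=
  arboricity_maker_monotone_general G k h
end

section
/- There exists a graph H (on 6 vertices) with χ_gb(H) = 3 and χ_g(H) = 2, where χ_gb is the game chromatic number of the vertex colouring game in which Breaker may additionally play 'blank' moves; in particular allowing blanks can strictly help Breaker. -/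
/-- In the vertex colouring game with blanks, the state of a vertex is `none`
(unplayed), `some none` (declared blank by Breaker), or `some (some c)` (coloured `c`). -/
abbrev BState (k : ℕ) := Option (Option (Fin k))

/-- Colour `c` is legal at `v`: the vertex is unplayed and no neighbour has colour `c`. -/
def BLegal {V : Type} (G : SimpleGraph V) {k : ℕ} (col : V → BState k)
    (v : V) (c : Fin k) : Prop :=
  col v = none ∧ ∀ u, G.Adj u v → col u ≠ some (some c)

/-- Some unplayed (uncoloured and unblanked) vertex has all `k` colours among its
coloured neighbours: Breaker's winning condition in the game with blanks. -/
def BStuck {V : Type} (G : SimpleGraph V) {k : ℕ} (col : V → BState k) : Prop :=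
  ∃ v, col v = none ∧ ∀ c : Fin k, ∃ u, G.Adj u v ∧ col u = some (some c)

/-- `BMakerWins G k col t` : Maker has a winning strategy in the vertex colouring game
with blanks on `G` with `k` colours from position `col` (`t = true`: Maker's turn).
Maker must assign legal colours; Breaker may assign a legal colour or declare an
unplayed vertex blank.  Maker wins when every vertex is coloured or blank. -/
inductive BMakerWins {V : Type} [DecidableEq V] (G : SimpleGraph V) (k : ℕ) :
    (V → BState k) → Bool → Prop
  | done (col : V → BState k) (t : Bool) (h : ∀ v, col v ≠ none) :
      BMakerWins G k col t
  | maker (col : V → BState k) (hns : ¬ BStuck G col) (v : V) (c : Fin k)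
      (hc : BLegal G col v c)
      (ih : BMakerWins G k (Function.update col v (some (some c))) false) :
      BMakerWins G k col true
  | breaker (col : V → BState k) (hns : ¬ BStuck G col) (hne : ∃ v, col v = none)
      (ihc : ∀ v c, BLegal G col v c →
        BMakerWins G k (Function.update col v (some (some c))) true)
      (ihb : ∀ v, col v = none →
        BMakerWins G k (Function.update col v (some none)) true) :
      BMakerWins G k col false

/-- `BBreakerWins G k col t` : Breaker has a winning strategy in the vertex colouring
game with blanks on `G` with `k` colours from position `col`. -/
inductive BBreakerWins {V : Type} [DecidableEq V] (G : SimpleGraph V) (k : ℕ) :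
    (V → BState k) → Bool → Prop
  | stuck (col : V → BState k) (t : Bool) (h : BStuck G col) : BBreakerWins G k col t
  | maker (col : V → BState k) (hne : ∃ v, col v = none)
      (ih : ∀ v c, BLegal G col v c →
        BBreakerWins G k (Function.update col v (some (some c))) false) :
      BBreakerWins G k col true
  | colour (col : V → BState k) (v : V) (c : Fin k) (hc : BLegal G col v c)
      (ih : BBreakerWins G k (Function.update col v (some (some c))) true) :
      BBreakerWins G k col false
  | blank (col : V → BState k) (v : V) (hv : col v = none)
      (ih : BBreakerWins G k (Function.update col v (some none)) true) :
      BBreakerWins G k col false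

/-- Colour `c` is legal at vertex `v` in the vertex colouring game: `v` is uncoloured
and no neighbour of `v` has colour `c`. -/
def VLegal {V : Type} (G : SimpleGraph V) {k : ℕ} (col : V → Option (Fin k))
    (v : V) (c : Fin k) : Prop :=
  col v = none ∧ ∀ u, G.Adj u v → col u ≠ some c

/-- Some uncoloured vertex has all `k` colours among its coloured neighbours, so it is
impossible to colour: Breaker's winning condition. -/
def VStuck {V : Type} (G : SimpleGraph V) {k : ℕ} (col : V → Option (Fin k)) : Prop :=
  ∃ v, col v = none ∧ ∀ c : Fin k, ∃ u, G.Adj u v ∧ col u = some c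

/-- `VMakerWins G k col t` : Maker has a winning strategy in the vertex colouring game
on `G` with `k` colours from position `col` (`t = true`: Maker's turn, `t = false`:
Breaker's turn).  Maker wins when the whole graph gets coloured, no vertex ever having
become impossible to colour. -/
inductive VMakerWins {V : Type} [DecidableEq V] (G : SimpleGraph V) (k : ℕ) :
    (V → Option (Fin k)) → Bool → Prop
  | done (col : V → Option (Fin k)) (t : Bool) (h : ∀ v, col v ≠ none) :
      VMakerWins G k col t
  | maker (col : V → Option (Fin k)) (hns : ¬ VStuck G col) (v : V) (c : Fin k)
      (hc : VLegal G col v c)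
      (ih : VMakerWins G k (Function.update col v (some c)) false) :
      VMakerWins G k col true
  | breaker (col : V → Option (Fin k)) (hns : ¬ VStuck G col) (hne : ∃ v, col v = none)
      (ih : ∀ v c, VLegal G col v c →
        VMakerWins G k (Function.update col v (some c)) true) :
      VMakerWins G k col false

/-- The witness graph `H` on 6 vertices (vertex `i` of the description is `i - 1`):
edges {1,3}, {3,4}, {3,5}, {5,6}, {4,6}, and vertex 2 isolated — a 4-cycle 3-4-6-5 with
a pendant vertex at 3 and one isolated vertex. -/
def Hblank : SimpleGraph (Fin 6) :=
  SimpleGraph.fromRel (fun u v =>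
    (u.1 = 0 ∧ v.1 = 2) ∨ (u.1 = 2 ∧ v.1 = 3) ∨ (u.1 = 2 ∧ v.1 = 4) ∨
    (u.1 = 4 ∧ v.1 = 5) ∨ (u.1 = 3 ∧ v.1 = 5))

section Aux

instance : DecidableRel Hblank.Adj := fun u v =>
  decidable_of_iff _ (SimpleGraph.fromRel_adj _ u v).symm

variable {V : Type} [Fintype V] [DecidableEq V] (G : SimpleGraph V) [DecidableRel G.Adj]
  (k : ℕ)

instance instDecBStuck (col : V → BState k) : Decidable (BStuck G col) := by
  unfold BStuck; infer_instance

instance instDecBLegal (col : V → BState k) (v : V) (c : Fin k) :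
    Decidable (BLegal G col v c) := by
  unfold BLegal; infer_instance

instance instDecVStuck (col : V → Option (Fin k)) : Decidable (VStuck G col) := by
  unfold VStuck; infer_instance

instance instDecVLegal (col : V → Option (Fin k)) (v : V) (c : Fin k) :
    Decidable (VLegal G col v c) := by
  unfold VLegal; infer_instance

/-- Number of unplayed vertices. -/
def noneCount {α : Type} (col : V → Option α) : ℕ :=
  (Finset.univ.filter (fun v => (col v).isNone)).card

lemma noneCount_update {α : Type} (col : V → Option α) (v : V) (x : α)
    (hv : col v = none) :
    noneCount (Function.update col v (some x)) + 1 = noneCount col := by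
  unfold noneCount
  have h1 : Finset.univ.filter (fun u => (Function.update col v (some x) u).isNone) =
      (Finset.univ.filter (fun u => (col u).isNone)).erase v := by
    ext u
    simp only [Finset.mem_filter, Finset.mem_univ, true_and, Finset.mem_erase,
      Option.isNone_iff_eq_none]
    rcases eq_or_ne u v with rfl | hne
    · simp [Function.update_self]
    · simp [Function.update_of_ne hne, hne]
  rw [h1, Finset.card_erase_of_mem (by simp [hv])]
  have : 0 < (Finset.univ.filter (fun u => (col u).isNone)).card :=
    Finset.card_pos.2 ⟨v, by simp [hv]⟩
  omega

lemma noneCount_pos {α : Type} (col : V → Option α) (v : V) (hv : col v = none) :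
    0 < noneCount col := by
  unfold noneCount
  exact Finset.card_pos.2 ⟨v, by simp [hv]⟩

/-- Fuel-based evaluator for the game with blanks. -/
def bmw : ℕ → (V → BState k) → Bool → Bool
  | 0, col, _ => decide (∀ v, col v ≠ none)
  | n+1, col, true =>
      decide (∀ v, col v ≠ none) ||
      (!decide (BStuck G col) &&
        decide (∃ v, ∃ c : Fin k, BLegal G col v c ∧
          bmw n (Function.update col v (some (some c))) false = true))
  | n+1, col, false =>
      decide (∀ v, col v ≠ none) ||
      (!decide (BStuck G col) && decide (∃ v, col v = none) &&
        decide ((∀ v, ∀ c : Fin k, BLegal G col v c →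
            bmw n (Function.update col v (some (some c))) true = true) ∧
          (∀ v, col v = none →
            bmw n (Function.update col v (some none)) true = true)))

/-- Fuel-based evaluator for the ordinary vertex colouring game. -/
def vmw : ℕ → (V → Option (Fin k)) → Bool → Bool
  | 0, col, _ => decide (∀ v, col v ≠ none)
  | n+1, col, true =>
      decide (∀ v, col v ≠ none) ||
      (!decide (VStuck G col) &&
        decide (∃ v, ∃ c : Fin k, VLegal G col v c ∧
          vmw n (Function.update col v (some c)) false = true))
  | n+1, col, false =>
      decide (∀ v, col v ≠ none) ||
      (!decide (VStuck G col) && decide (∃ v, col v = none) &&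
        decide (∀ v, ∀ c : Fin k, VLegal G col v c →
          vmw n (Function.update col v (some c)) true = true))

lemma bmw_sound : ∀ (n : ℕ) (col : V → BState k) (t : Bool),
    bmw G k n col t = true → BMakerWins G k col t := by
  intro n
  induction n with
  | zero =>
    intro col t h
    exact BMakerWins.done col t (by simpa using of_decide_eq_true h)
  | succ n ih =>
    intro col t h
    cases t with
    | true =>
      rw [bmw] at h
      rcases Bool.or_eq_true_iff.1 h with h1 | h2
      · exact BMakerWins.done col true (of_decide_eq_true h1)
      · rcases Bool.and_eq_true_iff.1 h2 with ⟨hns, hex⟩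
        obtain ⟨v, c, hc, hw⟩ := of_decide_eq_true hex
        refine BMakerWins.maker col ?_ v c hc (ih _ false hw)
        intro hst
        simp [decide_eq_true hst] at hns
    | false =>
      rw [bmw] at h
      rcases Bool.or_eq_true_iff.1 h with h1 | h2
      · exact BMakerWins.done col false (of_decide_eq_true h1)
      · rcases Bool.and_eq_true_iff.1 h2 with ⟨h3, hforall⟩
        rcases Bool.and_eq_true_iff.1 h3 with ⟨hns, hne⟩
        obtain ⟨hA, hB⟩ := of_decide_eq_true hforall
        refine BMakerWins.breaker col ?_ (of_decide_eq_true hne)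
          (fun v c hc => ih _ true (hA v c hc))
          (fun v hv => ih _ true (hB v hv))
        intro hst
        simp [decide_eq_true hst] at hns

lemma vmw_sound : ∀ (n : ℕ) (col : V → Option (Fin k)) (t : Bool),
    vmw G k n col t = true → VMakerWins G k col t := by
  intro n
  induction n with
  | zero =>
    intro col t h
    exact VMakerWins.done col t (by simpa using of_decide_eq_true h)
  | succ n ih =>
    intro col t h
    cases t with
    | true =>
      rw [vmw] at h
      rcases Bool.or_eq_true_iff.1 h with h1 | h2
      · exact VMakerWins.done col true (of_decide_eq_true h1)
      · rcases Bool.and_eq_true_iff.1 h2 with ⟨hns, hex⟩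
        obtain ⟨v, c, hc, hw⟩ := of_decide_eq_true hex
        refine VMakerWins.maker col ?_ v c hc (ih _ false hw)
        intro hst
        simp [decide_eq_true hst] at hns
    | false =>
      rw [vmw] at h
      rcases Bool.or_eq_true_iff.1 h with h1 | h2
      · exact VMakerWins.done col false (of_decide_eq_true h1)
      · rcases Bool.and_eq_true_iff.1 h2 with ⟨h3, hforall⟩
        rcases Bool.and_eq_true_iff.1 h3 with ⟨hns, hne⟩
        refine VMakerWins.breaker col ?_ (of_decide_eq_true hne)
          (fun v c hc => ih _ true (of_decide_eq_true hforall v c hc))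
        intro hst
        simp [decide_eq_true hst] at hns

lemma bmw_complete {col : V → BState k} {t : Bool}
    (hw : BMakerWins G k col t) :
    ∀ n, noneCount col ≤ n → bmw G k n col t = true := by
  induction hw with
  | done col t h =>
    intro n _
    cases n with
    | zero => exact decide_eq_true h
    | succ n => cases t <;> (rw [bmw]; simp [decide_eq_true h])
  | maker col hns v c hc ih ih2 =>
    intro n hn
    have hv : col v = none := hc.1
    have hpos := noneCount_pos col v hv
    cases n with
    | zero => omega
    | succ n =>
      rw [bmw]
      have hcnt := noneCount_update col v (some c) hv
      refine Bool.or_eq_true_iff.2 (Or.inr (Bool.and_eq_true_iff.2 ⟨?_, ?_⟩))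
      · simp [hns]
      · exact decide_eq_true ⟨v, c, hc, ih2 n (by omega)⟩
  | breaker col hns hne ihc ihb ih2c ih2b =>
    intro n hn
    obtain ⟨v, hv⟩ := hne
    have hpos := noneCount_pos col v hv
    cases n with
    | zero => omega
    | succ n =>
      rw [bmw]
      refine Bool.or_eq_true_iff.2 (Or.inr (Bool.and_eq_true_iff.2
        ⟨Bool.and_eq_true_iff.2 ⟨by simp [hns], decide_eq_true ⟨v, hv⟩⟩, ?_⟩))
      refine decide_eq_true ⟨fun u c hc => ?_, fun u hu => ?_⟩
      · have := noneCount_update col u (some c) hc.1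
        exact ih2c u c hc n (by omega)
      · have := noneCount_update col u none hu
        exact ih2b u hu n (by omega)

lemma vmw_complete {col : V → Option (Fin k)} {t : Bool}
    (hw : VMakerWins G k col t) :
    ∀ n, noneCount col ≤ n → vmw G k n col t = true := by
  induction hw with
  | done col t h =>
    intro n _
    cases n with
    | zero => exact decide_eq_true h
    | succ n => cases t <;> (rw [vmw]; simp [decide_eq_true h])
  | maker col hns v c hc ih ih2 =>
    intro n hn
    have hv : col v = none := hc.1
    have hpos := noneCount_pos col v hv
    cases n with
    | zero => omega
    | succ n =>
      rw [vmw]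
      have hcnt := noneCount_update col v c hv
      refine Bool.or_eq_true_iff.2 (Or.inr (Bool.and_eq_true_iff.2 ⟨?_, ?_⟩))
      · simp [hns]
      · exact decide_eq_true ⟨v, c, hc, ih2 n (by omega)⟩
  | breaker col hns hne ih ih2 =>
    intro n hn
    obtain ⟨v, hv⟩ := hne
    have hpos := noneCount_pos col v hv
    cases n with
    | zero => omega
    | succ n =>
      rw [vmw]
      refine Bool.or_eq_true_iff.2 (Or.inr (Bool.and_eq_true_iff.2
        ⟨Bool.and_eq_true_iff.2 ⟨by simp [hns], decide_eq_true ⟨v, hv⟩⟩, ?_⟩))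
      refine decide_eq_true (fun u c hc => ?_)
      have := noneCount_update col u c hc.1
      exact ih2 u c hc n (by omega)

end Aux

set_option maxRecDepth 1000000 in
set_option maxHeartbeats 16000000 in
lemma bmw_three : bmw Hblank 3 6 (fun _ => none) true = true := by decide

set_option maxRecDepth 1000000 in
set_option maxHeartbeats 16000000 in
lemma bmw_two : bmw Hblank 2 6 (fun _ => none) true = false := by decide

set_option maxRecDepth 1000000 in
set_option maxHeartbeats 16000000 in
lemma bmw_one : bmw Hblank 1 6 (fun _ => none) true = false := by decide

set_option maxRecDepth 1000000 in
set_option maxHeartbeats 16000000 in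
lemma bmw_zero : bmw Hblank 0 6 (fun _ => none) true = false := by decide

set_option maxRecDepth 1000000 in
set_option maxHeartbeats 16000000 in
lemma vmw_two : vmw Hblank 2 6 (fun _ => none) true = true := by decide

set_option maxRecDepth 1000000 in
set_option maxHeartbeats 16000000 in
lemma vmw_one : vmw Hblank 1 6 (fun _ => none) true = false := by decide

set_option maxRecDepth 1000000 in
set_option maxHeartbeats 16000000 in
lemma vmw_zero : vmw Hblank 0 6 (fun _ => none) true = false := by decide

lemma noneCount_le_six {α : Type} (col : Fin 6 → Option α) : noneCount col ≤ 6 := by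
  unfold noneCount
  simpa using Finset.card_filter_le Finset.univ (fun v => (col v).isNone)

/-- There is a graph `H` on 6 vertices whose game chromatic number
for the vertex colouring game with blanks is 3 while its usual game chromatic number
is 2: allowing Breaker to play blanks can strictly help Breaker. -/
theorem blanks_help_breaker :
    sInf {k : ℕ | BMakerWins Hblank k (fun _ => none) true} = 3 ∧
    sInf {k : ℕ | VMakerWins Hblank k (fun _ => none) true} = 2 := by
  have hB3 : BMakerWins Hblank 3 (fun _ => none) true :=
    bmw_sound Hblank 3 6 _ true bmw_three
  have hV2 : VMakerWins Hblank 2 (fun _ => none) true :=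
    vmw_sound Hblank 2 6 _ true vmw_two
  have hBnot : ∀ k, k < 3 → ¬ BMakerWins Hblank k (fun _ => none) true := by
    intro k hk hw
    have h6 := bmw_complete Hblank k hw 6 (noneCount_le_six _)
    interval_cases k
    · rw [bmw_zero] at h6; exact Bool.false_ne_true h6
    · rw [bmw_one] at h6; exact Bool.false_ne_true h6
    · rw [bmw_two] at h6; exact Bool.false_ne_true h6
  have hVnot : ∀ k, k < 2 → ¬ VMakerWins Hblank k (fun _ => none) true := by
    intro k hk hw
    have h6 := vmw_complete Hblank k hw 6 (noneCount_le_six _)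
    interval_cases k
    · rw [vmw_zero] at h6; exact Bool.false_ne_true h6
    · rw [vmw_one] at h6; exact Bool.false_ne_true h6
  constructor
  · refine le_antisymm (Nat.sInf_le hB3) (le_csInf ⟨3, hB3⟩ fun b hb => ?_)
    by_contra h
    exact hBnot b (by omega) hb
  · refine le_antisymm (Nat.sInf_le hV2) (le_csInf ⟨2, hV2⟩ fun b hb => ?_)
    by_contra h
    exact hVnot b (by omega) hb
end
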